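/- For n ≥ 3 odd, the complete bipartite graph K_{2,n-2} has signed edge domination number equal to 2 if n = 3, equal to 4 if n = 5, and equal to 6 if n ≥ 7. -/

import Mathlib

/-!
Write an SEDF of `K_{2,m}` as two rows `x, y ∈ {±1}^m`, the values on the edges at the two
vertices of the small side. The closed neighbourhood of the edge from the first of them to `w`
has weight `∑ x + y w`, so the SEDF condition reads `∑ x + y w ≥ 1` and `∑ y + x w ≥ 1`.
For odd `m` the row sums are odd, and `y w ≤ 1` forces `∑ x ≥ 1`; if `∑ x = 1` then every
`y w = 1`, so `∑ y = m`. Hence either some row sum is `1` and the total is `m + 1`, or both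
are at least `3` and the total is at least `6`. Both values are attained: by a row of sum `1`
next to a row of ones, and (for `m ≥ 3`) by two equal rows of sum `3`. So
`γ'ₛ(K_{2,m}) = min (m + 1) 6`.
-/

open Finset

open scoped Classical

/-- The weight of a vertex `v`: the sum of `f` over the edges of `G` incident to `v`. -/
noncomputable def vweight {V : Type*} [Fintype V] [DecidableEq V]
    (G : SimpleGraph V) (f : Sym2 V → ℤ) (v : V) : ℤ :=
  ∑ e ∈ G.incidenceFinset v, f e

/-- `f` is a signed edge domination function of `G`: it takes values in `{1,-1}` on the
edges and for each edge `e = uv`, `∑_{e' ∈ N[e]} f e' = f(u) + f(v) - f(e) ≥ 1`. -/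
noncomputable def IsSEDF {V : Type*} [Fintype V] [DecidableEq V]
    (G : SimpleGraph V) (f : Sym2 V → ℤ) : Prop :=
  (∀ e ∈ G.edgeFinset, f e = 1 ∨ f e = -1) ∧
  ∀ ⦃u v⦄, G.Adj u v → 1 ≤ vweight G f u + vweight G f v - f s(u, v)

/-- `f ∈ SEDF⁰(G)`: `f` takes values in `{1,-1}` on the edges, every vertex has
nonnegative weight, and both endpoints of any positive edge have weights summing to ≥ 2. -/
noncomputable def IsSEDF0 {V : Type*} [Fintype V] [DecidableEq V]
    (G : SimpleGraph V) (f : Sym2 V → ℤ) : Prop :=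
  (∀ e ∈ G.edgeFinset, f e = 1 ∨ f e = -1) ∧
  (∀ v, 0 ≤ vweight G f v) ∧
  ∀ ⦃u v⦄, G.Adj u v → f s(u, v) = 1 → 2 ≤ vweight G f u + vweight G f v

open SimpleGraph

/-- `γ'ₛ(G)` is the least element of this set. -/
def sedfWeights {V : Type*} [Fintype V] [DecidableEq V] (G : SimpleGraph V) [Fintype G.edgeSet] :
    Set ℤ :=
  {s | ∃ f : Sym2 V → ℤ, IsSEDF G f ∧ s = ∑ e ∈ G.edgeFinset, f e}

section CompleteBipartite

variable {α β : Type*}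

def bipartiteEdgeFun (g : α → β → ℤ) : Sym2 (α ⊕ β) → ℤ :=
  Sym2.lift ⟨fun u v ↦ match u, v with
    | .inl a, .inr b | .inr b, .inl a => g a b
    | _, _ => 0, by rintro (_ | _) (_ | _) <;> rfl⟩

@[simp]
theorem bipartiteEdgeFun_apply (g : α → β → ℤ) (a : α) (b : β) :
    bipartiteEdgeFun g s(.inl a, .inr b) = g a b :=
  rfl

variable [Fintype α] [Fintype β] [DecidableEq α] [DecidableEq β]

theorem sum_edgeFinset_completeBipartiteGraph (f : Sym2 (α ⊕ β) → ℤ) :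
    ∑ e ∈ (completeBipartiteGraph α β).edgeFinset, f e = ∑ a, ∑ b, f s(.inl a, .inr b) := by
  have hedges : (completeBipartiteGraph α β).edgeFinset =
      univ.image fun p : α × β ↦ s(.inl p.1, .inr p.2) := by
    ext e
    simp [← Set.mem_range, ← edgeSet_completeBipartiteGraph]
  rw [hedges, sum_image fun p _ q _ h ↦ by simpa [Prod.ext_iff] using h, ← univ_product_univ,
    sum_product]

theorem vweight_completeBipartiteGraph_inl (f : Sym2 (α ⊕ β) → ℤ) (a : α) :
    vweight (completeBipartiteGraph α β) f (.inl a) = ∑ b, f s(.inl a, .inr b) := by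
  rw [vweight, incidenceFinset_eq_filter, sum_filter, sum_edgeFinset_completeBipartiteGraph]
  simp

theorem vweight_completeBipartiteGraph_inr (f : Sym2 (α ⊕ β) → ℤ) (b : β) :
    vweight (completeBipartiteGraph α β) f (.inr b) = ∑ a, f s(.inl a, .inr b) := by
  rw [vweight, incidenceFinset_eq_filter, sum_filter, sum_edgeFinset_completeBipartiteGraph,
    sum_comm]
  simp

theorem isSEDF_completeBipartiteGraph_iff (f : Sym2 (α ⊕ β) → ℤ) :
    IsSEDF (completeBipartiteGraph α β) f ↔
      (∀ a b, f s(.inl a, .inr b) = 1 ∨ f s(.inl a, .inr b) = -1) ∧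
      ∀ a b, 1 ≤ ∑ b', f s(.inl a, .inr b') + ∑ a', f s(.inl a', .inr b) - f s(.inl a, .inr b) := by
  simp only [IsSEDF, mem_edgeFinset, edgeSet_completeBipartiteGraph, Set.forall_mem_range,
    Prod.forall]
  refine and_congr_right fun _ ↦ ⟨fun h a b ↦ ?_, fun h ↦ ?_⟩
  · simpa only [vweight_completeBipartiteGraph_inl, vweight_completeBipartiteGraph_inr]
      using h (u := .inl a) (v := .inr b) (by simp)
  · rintro (a | b) (a' | b') hadj
    · simp at hadj
    · simpa only [vweight_completeBipartiteGraph_inl, vweight_completeBipartiteGraph_inr]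
        using h a b'
    · rw [vweight_completeBipartiteGraph_inl, vweight_completeBipartiteGraph_inr, Sym2.eq_swap]
      linarith [h a' b]
    · simp at hadj

theorem mem_sedfWeights_completeBipartiteGraph {s : ℤ} :
    s ∈ sedfWeights (completeBipartiteGraph α β) ↔
      ∃ g : α → β → ℤ, (∀ a b, g a b = 1 ∨ g a b = -1) ∧
        (∀ a b, 1 ≤ ∑ b', g a b' + ∑ a', g a' b - g a b) ∧ s = ∑ a, ∑ b, g a b := by
  simp only [sedfWeights, Set.mem_ofPred_eq, isSEDF_completeBipartiteGraph_iff,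
    sum_edgeFinset_completeBipartiteGraph]
  constructor
  · rintro ⟨f, hf, rfl⟩
    exact ⟨fun a b ↦ f s(.inl a, .inr b), hf.1, hf.2, rfl⟩
  · rintro ⟨g, hsign, hdom, rfl⟩
    exact ⟨bipartiteEdgeFun g, by simpa using ⟨hsign, hdom⟩, by simp⟩

end CompleteBipartite

section Rows

variable {ι : Type*} [Fintype ι] {x y : ι → ℤ}

structure IsSEDFRows (x y : ι → ℤ) : Prop where
  sign_left : ∀ i, x i = 1 ∨ x i = -1
  sign_right : ∀ i, y i = 1 ∨ y i = -1
  one_le_left : ∀ i, 1 ≤ ∑ j, x j + y i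
  one_le_right : ∀ i, 1 ≤ ∑ j, y j + x i

theorem IsSEDFRows.symm (h : IsSEDFRows x y) : IsSEDFRows y x :=
  ⟨h.sign_right, h.sign_left, h.one_le_right, h.one_le_left⟩

theorem odd_sum_of_forall_eq_one_or_eq_neg_one (hx : ∀ i, x i = 1 ∨ x i = -1)
    (hι : Odd (Fintype.card ι)) : Odd (∑ i, x i) := by
  have heven : Even (∑ i, (x i + 1)) :=
    even_iff_two_dvd.mpr <| dvd_sum fun i _ ↦ by rcases hx i with h | h <;> simp [h]
  have hsum : ∑ i, x i = ∑ i, (x i + 1) - Fintype.card ι := by simp [sum_add_distrib]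
  rw [hsum]
  exact heven.sub_odd (by exact_mod_cast hι)

theorem IsSEDFRows.one_le_sum_left (h : IsSEDFRows x y) (hι : Odd (Fintype.card ι)) :
    1 ≤ ∑ i, x i := by
  obtain ⟨i⟩ : Nonempty ι := Fintype.card_pos_iff.mp hι.pos
  obtain ⟨k, hk⟩ := odd_sum_of_forall_eq_one_or_eq_neg_one h.sign_left hι
  have := h.one_le_left i
  rcases h.sign_right i with hy | hy <;> omega

theorem IsSEDFRows.sum_right_eq_card (h : IsSEDFRows x y) (hx : ∑ i, x i = 1) :
    ∑ i, y i = Fintype.card ι := by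
  have hy : ∀ i, y i = 1 := fun i ↦ by
    have := h.one_le_left i
    rcases h.sign_right i with hy | hy <;> omega
  simp [hy]

theorem IsSEDFRows.min_le_sum (h : IsSEDFRows x y) (hι : Odd (Fintype.card ι)) :
    min ((Fintype.card ι : ℤ) + 1) 6 ≤ ∑ i, x i + ∑ i, y i := by
  obtain ⟨k, hk⟩ := odd_sum_of_forall_eq_one_or_eq_neg_one h.sign_left hι
  obtain ⟨l, hl⟩ := odd_sum_of_forall_eq_one_or_eq_neg_one h.sign_right hι
  have hx := h.one_le_sum_left hι
  have hy := h.symm.one_le_sum_left hι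
  by_cases hx1 : ∑ i, x i = 1
  · rw [hx1, h.sum_right_eq_card hx1]
    exact (min_le_left _ _).trans_eq (add_comm _ _)
  by_cases hy1 : ∑ i, y i = 1
  · rw [hy1, h.symm.sum_right_eq_card hy1]
    exact min_le_left _ _
  exact (min_le_right _ _).trans (by omega)

end Rows

theorem mem_sedfWeights_completeBipartiteGraph_fin_two {β : Type*} [Fintype β] [DecidableEq β]
    {s : ℤ} : s ∈ sedfWeights (completeBipartiteGraph (Fin 2) β) ↔
      ∃ x y : β → ℤ, IsSEDFRows x y ∧ s = ∑ b, x b + ∑ b, y b := by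
  simp only [mem_sedfWeights_completeBipartiteGraph, Fin.forall_fin_two, Fin.sum_univ_two]
  constructor
  · rintro ⟨g, ⟨hsign₀, hsign₁⟩, ⟨hdom₀, hdom₁⟩, rfl⟩
    exact ⟨g 0, g 1, ⟨hsign₀, hsign₁, fun b ↦ by linarith [hdom₀ b], fun b ↦ by linarith [hdom₁ b]⟩,
      rfl⟩
  · rintro ⟨x, y, h, rfl⟩
    refine ⟨![x, y], ⟨h.sign_left, h.sign_right⟩, ⟨fun b ↦ ?_, fun b ↦ ?_⟩, rfl⟩
    · simp only [Matrix.cons_val_zero, Matrix.cons_val_one]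
      linarith [h.one_le_left b]
    · simp only [Matrix.cons_val_zero, Matrix.cons_val_one]
      linarith [h.one_le_right b]

def signVec (m p : ℕ) : Fin m → ℤ := fun j ↦ if (j : ℕ) < p then 1 else -1

theorem signVec_eq_one_or_eq_neg_one {m : ℕ} (p : ℕ) (j : Fin m) :
    signVec m p j = 1 ∨ signVec m p j = -1 := by
  unfold signVec
  split_ifs <;> simp

theorem sum_signVec {m p : ℕ} (hp : p ≤ m) : ∑ j, signVec m p j = 2 * p - m := by
  unfold signVec
  rw [Fin.sum_univ_eq_sum_range (fun j ↦ if j < p then (1 : ℤ) else -1), sum_ite]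
  have hlt : (range m).filter (· < p) = range p := by ext; simp only [mem_filter, mem_range]; omega
  have hge : (range m).filter (p ≤ ·) = Ico p m := by ext; simp only [mem_filter, mem_range, mem_Ico]; omega
  simp only [hlt, not_lt, hge, sum_const, card_range, Nat.card_Ico, Int.nsmul_eq_mul, mul_one]
  omega

section KTwo

variable {m : ℕ}

theorem succ_mem_sedfWeights_completeBipartiteGraph (hm : Odd m) :
    (m : ℤ) + 1 ∈ sedfWeights (completeBipartiteGraph (Fin 2) (Fin m)) := by
  obtain ⟨t, rfl⟩ := hm
  have hx : ∑ j, signVec (2 * t + 1) (t + 1) j = 1 := by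
    rw [sum_signVec (by omega)]
    push_cast
    ring
  rw [mem_sedfWeights_completeBipartiteGraph_fin_two]
  refine ⟨signVec _ (t + 1), fun _ ↦ 1, ⟨signVec_eq_one_or_eq_neg_one _, fun _ ↦ Or.inl rfl,
    fun j ↦ by rw [hx]; norm_num, fun j ↦ ?_⟩, by simp [hx, add_comm]⟩
  have := j.isLt
  simp only [signVec, sum_const, card_univ, Fintype.card_fin, nsmul_eq_mul, mul_one]
  split_ifs <;> omega

theorem six_mem_sedfWeights_completeBipartiteGraph (hm : Odd m) (h3 : 3 ≤ m) :
    6 ∈ sedfWeights (completeBipartiteGraph (Fin 2) (Fin m)) := by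
  obtain ⟨t, rfl⟩ := hm
  have hx : ∑ j, signVec (2 * t + 1) (t + 2) j = 3 := by
    rw [sum_signVec (by omega)]
    push_cast
    ring
  have hdom : ∀ i, 1 ≤ ∑ j, signVec (2 * t + 1) (t + 2) j + signVec (2 * t + 1) (t + 2) i :=
    fun i ↦ by rcases signVec_eq_one_or_eq_neg_one (t + 2) i with h | h <;> omega
  rw [mem_sedfWeights_completeBipartiteGraph_fin_two]
  exact ⟨_, _, ⟨signVec_eq_one_or_eq_neg_one _, signVec_eq_one_or_eq_neg_one _, hdom, hdom⟩,
    by rw [hx]; norm_num⟩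

theorem isLeast_sedfWeights_completeBipartiteGraph_fin_two (hm : Odd m) :
    IsLeast (sedfWeights (completeBipartiteGraph (Fin 2) (Fin m))) (min ((m : ℤ) + 1) 6) := by
  refine ⟨?_, fun s hs ↦ ?_⟩
  · rcases le_total ((m : ℤ) + 1) 6 with h | h
    · rw [min_eq_left h]
      exact succ_mem_sedfWeights_completeBipartiteGraph hm
    · rw [min_eq_right h]
      exact six_mem_sedfWeights_completeBipartiteGraph hm (by omega)
  · obtain ⟨x, y, h, rfl⟩ := mem_sedfWeights_completeBipartiteGraph_fin_two.mp hs
    simpa using h.min_le_sum (by simpa using hm)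

end KTwo

/-- for odd `n ≥ 3`, `γ'ₛ(K_{2,n-2})` equals `2` if `n = 3`,
`4` if `n = 5`, and `6` if `n ≥ 7`. -/
theorem stmt12 (n : ℕ) (hn3 : 3 ≤ n) (hn : Odd n) :
    IsLeast
      {s : ℤ | ∃ f : Sym2 (Fin 2 ⊕ Fin (n - 2)) → ℤ,
        IsSEDF (completeBipartiteGraph (Fin 2) (Fin (n - 2))) f ∧
          s = ∑ e ∈ (completeBipartiteGraph (Fin 2) (Fin (n - 2))).edgeFinset, f e}
      (if n = 3 then 2 else if n = 5 then 4 else 6) := by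
  have hm : Odd (n - 2) := Nat.Odd.sub_even (by omega) hn even_two
  have hvalue : (if n = 3 then 2 else if n = 5 then 4 else 6 : ℤ) =
      min (((n - 2 : ℕ) : ℤ) + 1) 6 := by
    obtain ⟨k, rfl⟩ := hn
    split_ifs <;> omega
  rw [hvalue]
  exact isLeast_sedfWeights_completeBipartiteGraph_fin_two hm
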